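/- Let m = 10 + 12q with q = 3 + 4d for some nonnegative integer d, write q = 2^u − 1 + 2^{u+1}·r where u = min{ i ≥ 1 : the i-th binary digit of q is 0 } and r ∈ ℤ. Then for every k with 0 ≤ k ≤ 2^{u+1} − 1: F_m(1+2k) ≡ 2^{u+3} − 1 − 2k (mod 2^{u+4}) and F_m(2^{u+3} − 1 − 2k) ≡ 1 + 2k (mod 2^{u+4}), so {1+2k, 2^{u+3}−1−2k} is a 2-cycle of F_m at level u+4. -/

import Mathlib

/-!
For odd `x`, the pair `(F_T(x), F_{T+1}(x))` with `T = 3·2^(n+1)` is congruent to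
`(0, 1 + 2^(n+2))` modulo `2^(n+3)`: this holds for `T = 6` and survives doubling `T` by the
duplication formulas `F_{2T} = F_T (2F_{T+1} - x F_T)` and `F_{2T+1} = F_{T+1}^2 + F_T^2`.
Modulo `2^(u+4)` the sequence `F_n(x)` is therefore periodic with period `3·2^(u+3)`, and
`10 + 12q ≡ 3·2^(u+2) - 2` modulo that period. Running the recurrence two steps back from
`T = 3·2^(u+2)` gives `F_{10+12q}(x) ≡ 2^(u+3) - x (mod 2^(u+4))`, and `x ↦ 2^(u+3) - x` is an
involution on odd residues.
-/

open Polynomial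

noncomputable def fibPoly : ℕ → Polynomial ℤ
  | 0 => 0
  | 1 => 1
  | n + 2 => X * fibPoly (n + 1) + fibPoly n

@[simp] lemma fibPoly_zero : fibPoly 0 = 0 := rfl

@[simp] lemma fibPoly_one : fibPoly 1 = 1 := rfl

lemma fibPoly_add_two (n : ℕ) : fibPoly (n + 2) = X * fibPoly (n + 1) + fibPoly n := rfl

lemma fibPoly_add (m n : ℕ) :
    fibPoly (m + n + 1) = fibPoly (m + 1) * fibPoly (n + 1) + fibPoly m * fibPoly n := by
  induction n using Nat.twoStepInduction generalizing m with
  | zero => simp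
  | one => rw [fibPoly_add_two, fibPoly_add_two 0]; simp; ring
  | more n ih₁ ih₂ =>
    rw [show m + (n + 2) + 1 = m + n + 1 + 2 by omega, fibPoly_add_two,
      show m + n + 1 + 1 = m + (n + 1) + 1 by omega, ih₁, ih₂]
    simp only [fibPoly_add_two]
    ring

lemma fibPoly_two_mul_add_one (n : ℕ) :
    fibPoly (2 * n + 1) = fibPoly (n + 1) ^ 2 + fibPoly n ^ 2 := by
  rw [two_mul, fibPoly_add]; ring

lemma fibPoly_two_mul (n : ℕ) :
    fibPoly (2 * n) = fibPoly n * (2 * fibPoly (n + 1) - X * fibPoly n) := by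
  cases n with
  | zero => simp
  | succ n =>
    rw [show 2 * (n + 1) = n + (n + 1) + 1 by omega, fibPoly_add, fibPoly_add_two]
    ring

section Eval

variable {x : ℤ}

lemma fibPoly_eval_add_two (n : ℕ) :
    (fibPoly (n + 2)).eval x = x * (fibPoly (n + 1)).eval x + (fibPoly n).eval x := by
  simp [fibPoly_add_two]

lemma fibPoly_eval_add_modEq {L : ℤ} {T : ℕ} (h₀ : (fibPoly T).eval x ≡ 0 [ZMOD L])
    (h₁ : (fibPoly (T + 1)).eval x ≡ 1 [ZMOD L]) (m : ℕ) :
    (fibPoly (m + T)).eval x ≡ (fibPoly m).eval x [ZMOD L] := by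
  cases m with
  | zero => simpa using h₀
  | succ m =>
    rw [show m + 1 + T = m + T + 1 by omega, fibPoly_add, eval_add, eval_mul, eval_mul]
    calc _ ≡ (fibPoly (m + 1)).eval x * 1 + (fibPoly m).eval x * 0 [ZMOD L] := by gcongr
      _ = _ := by ring

lemma fibPoly_eval_add_mul_modEq {L : ℤ} {T : ℕ} (h₀ : (fibPoly T).eval x ≡ 0 [ZMOD L])
    (h₁ : (fibPoly (T + 1)).eval x ≡ 1 [ZMOD L]) (m r : ℕ) :
    (fibPoly (m + T * r)).eval x ≡ (fibPoly m).eval x [ZMOD L] := by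
  induction r with
  | zero => rfl
  | succ r ih =>
    rw [mul_add_one, ← add_assoc]
    exact (fibPoly_eval_add_modEq h₀ h₁ _).trans ih

lemma fibPoly_eval_two_mul_modEq {h : ℤ} (hh : 4 ∣ h) {T : ℕ}
    (h₀ : (fibPoly T).eval x ≡ 0 [ZMOD 2 * h])
    (h₁ : (fibPoly (T + 1)).eval x ≡ 1 + h [ZMOD 2 * h]) :
    (fibPoly (2 * T)).eval x ≡ 0 [ZMOD 4 * h] ∧
      (fibPoly (2 * T + 1)).eval x ≡ 1 + 2 * h [ZMOD 4 * h] := by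
  obtain ⟨e, rfl⟩ := hh
  obtain ⟨a, ha⟩ := Int.modEq_zero_iff_dvd.1 h₀
  obtain ⟨b, hb⟩ := Int.modEq_iff_add_fac.1 h₁.symm
  rw [fibPoly_two_mul, fibPoly_two_mul_add_one]
  simp only [eval_add, eval_mul, eval_sub, eval_pow, eval_X, eval_ofNat, ha, hb]
  constructor
  · exact Int.modEq_zero_iff_dvd.2 ⟨a * (1 + 4 * e * (1 + 2 * b - a * x)), by ring⟩
  · exact (Int.modEq_iff_add_fac.2 ⟨b + e * (1 + 2 * b) ^ 2 + 4 * e * a ^ 2, by ring⟩).symm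

lemma fibPoly_eval_three_mul_two_pow (hx : Odd x) (n : ℕ) :
    (fibPoly (3 * 2 ^ (n + 1))).eval x ≡ 0 [ZMOD 2 ^ (n + 3)] ∧
      (fibPoly (3 * 2 ^ (n + 1) + 1)).eval x ≡ 1 + 2 ^ (n + 2) [ZMOD 2 ^ (n + 3)] := by
  induction n with
  | zero =>
    obtain ⟨y, hy⟩ := hx
    obtain ⟨c, hc⟩ := Int.even_mul_succ_self y
    have hsq : x ^ 2 = 8 * c + 1 := by rw [hy]; linear_combination 4 * hc
    -- `F_6 = x (x^2 + 1) (x^2 + 3)` and `F_7 = s^3 + 5 s^2 + 6 s + 1` with `s = x^2 = 8c + 1`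
    norm_num only [fibPoly_eval_add_two, fibPoly_zero, fibPoly_one, eval_zero, eval_one]
    constructor
    · exact Int.modEq_zero_iff_dvd.2 ⟨x * (4 * c + 1) * (2 * c + 1), by
        linear_combination x * (x ^ 2 + 8 * c + 5) * hsq⟩
    · refine (Int.modEq_iff_add_fac.2 ⟨64 * c ^ 3 + 64 * c ^ 2 + 19 * c + 1, ?_⟩).symm
      linear_combination
        (x ^ 4 + x ^ 2 * (8 * c + 1) + (8 * c + 1) ^ 2 + 5 * (x ^ 2 + 8 * c + 1) + 6) * hsq
  | succ n ih =>
    rw [show (2 : ℤ) ^ (n + 3) = 2 * 2 ^ (n + 2) by ring] at ih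
    rw [show 3 * 2 ^ (n + 1 + 1) = 2 * (3 * 2 ^ (n + 1)) by ring,
      show (2 : ℤ) ^ (n + 1 + 3) = 4 * 2 ^ (n + 2) by ring,
      show (2 : ℤ) ^ (n + 1 + 2) = 2 * 2 ^ (n + 2) by ring]
    exact fibPoly_eval_two_mul_modEq ⟨2 ^ n, by ring⟩ ih.1 ih.2

lemma fibPoly_eval_modEq_sub_of_add_two (hx : Odd x) {h : ℤ} {M : ℕ}
    (h₀ : (fibPoly (M + 2)).eval x ≡ 0 [ZMOD 2 * h])
    (h₁ : (fibPoly (M + 3)).eval x ≡ 1 + h [ZMOD 2 * h]) :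
    (fibPoly M).eval x ≡ h - x [ZMOD 2 * h] := by
  obtain ⟨y, rfl⟩ := hx
  obtain ⟨a, ha⟩ := Int.modEq_zero_iff_dvd.1 h₀
  obtain ⟨b, hb⟩ := Int.modEq_iff_add_fac.1 h₁.symm
  rw [fibPoly_eval_add_two] at ha
  rw [fibPoly_eval_add_two, fibPoly_eval_add_two] at hb
  refine (Int.modEq_iff_add_fac.2
    ⟨a - (2 * y + 1) * b + a * (2 * y + 1) ^ 2 - 1 - y, ?_⟩).symm
  linear_combination (1 + (2 * y + 1) ^ 2) * ha - (2 * y + 1) * hb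

lemma fibPoly_eval_ten_add_twelve_mul_modEq (hx : Odd x) {q u r : ℕ}
    (hr : q = 2 ^ u - 1 + 2 ^ (u + 1) * r) :
    (fibPoly (10 + 12 * q)).eval x ≡ 2 ^ (u + 3) - x [ZMOD 2 ^ (u + 4)] := by
  obtain ⟨p, hp⟩ : ∃ p, 2 ^ u = p + 1 :=
    ⟨2 ^ u - 1, (Nat.sub_add_cancel Nat.one_le_two_pow).symm⟩
  obtain ⟨M, hM⟩ : ∃ M, M + 2 = 3 * 2 ^ (u + 2) := ⟨12 * p + 10, by rw [pow_add, hp]; ring⟩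
  have hidx : 10 + 12 * q = M + 3 * 2 ^ (u + 3) * r := by
    rw [pow_add, hp] at hM
    rw [hr, pow_add, pow_add, hp, Nat.add_sub_cancel]
    linarith
  have hval : (fibPoly M).eval x ≡ 2 ^ (u + 3) - x [ZMOD 2 ^ (u + 4)] := by
    obtain ⟨h₀, h₁⟩ := fibPoly_eval_three_mul_two_pow hx (u + 1)
    rw [← hM, show (2 : ℤ) ^ (u + 1 + 3) = 2 * 2 ^ (u + 3) by ring] at h₀ h₁
    rw [show (2 : ℤ) ^ (u + 4) = 2 * 2 ^ (u + 3) by ring]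
    exact fibPoly_eval_modEq_sub_of_add_two hx h₀ h₁
  have hdvd : (2 : ℤ) ^ (u + 4) ∣ 2 ^ (u + 2 + 3) := pow_dvd_pow 2 (by omega)
  obtain ⟨hT₀, hT₁⟩ := fibPoly_eval_three_mul_two_pow hx (u + 2)
  have hper := fibPoly_eval_add_mul_modEq (hT₀.of_dvd hdvd)
    ((hT₁.of_dvd hdvd).trans Int.add_modEq_right) M r
  rw [hidx]
  exact hper.trans hval

end Eval

theorem fibPoly_m_ten_mod_twelve_q_three_mod_four_general (q u r : ℕ)
    (hr : q = 2 ^ u - 1 + 2 ^ (u + 1) * r) :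
    ∀ k : ℕ, k ≤ 2 ^ (u + 1) - 1 →
      (fibPoly (10 + 12 * q)).eval (1 + 2 * (k : ℤ)) ≡
        2 ^ (u + 3) - 1 - 2 * (k : ℤ) [ZMOD (2 : ℤ) ^ (u + 4)] ∧
      (fibPoly (10 + 12 * q)).eval (2 ^ (u + 3) - 1 - 2 * (k : ℤ)) ≡
        1 + 2 * (k : ℤ) [ZMOD (2 : ℤ) ^ (u + 4)] := by
  intro k _
  have hodd : Odd (2 ^ (u + 3) - 1 - 2 * (k : ℤ)) := ⟨2 ^ (u + 2) - 1 - k, by ring⟩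
  constructor
  · convert fibPoly_eval_ten_add_twelve_mul_modEq (x := 1 + 2 * (k : ℤ)) ⟨k, by ring⟩ hr
      using 1
    ring
  · convert fibPoly_eval_ten_add_twelve_mul_modEq hodd hr using 1
    ring

theorem fibPoly_m_ten_mod_twelve_q_three_mod_four (q d u r : ℕ) (hq : q = 3 + 4 * d)
    (hu1 : 1 ≤ u) (hu : q.testBit u = false)
    (humin : ∀ i, 1 ≤ i → i < u → q.testBit i = true)
    (hr : q = 2 ^ u - 1 + 2 ^ (u + 1) * r) :
    ∀ k : ℕ, k ≤ 2 ^ (u + 1) - 1 →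
      (fibPoly (10 + 12 * q)).eval (1 + 2 * (k : ℤ)) ≡
        2 ^ (u + 3) - 1 - 2 * (k : ℤ) [ZMOD (2 : ℤ) ^ (u + 4)] ∧
      (fibPoly (10 + 12 * q)).eval (2 ^ (u + 3) - 1 - 2 * (k : ℤ)) ≡
        1 + 2 * (k : ℤ) [ZMOD (2 : ℤ) ^ (u + 4)] :=
  fibPoly_m_ten_mod_twelve_q_three_mod_four_general q u r hr
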